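/- Let r > 0, 0 < θ < 1, λ = rθ, and let K, B ≥ 1 be integers. Let X be a nonnegative random variable with CDF F(x) = 1 + e^{−rx}θ^{K+B}/(1−θ^{K+B}) − e^{−λx}/(1−θ^{K+B}). Then E[X] = (1−θ^{K+B+1}) / (λ(1−θ^{K+B})), i.e., E[X] equals the reciprocal of the valid-update rate λ(1−θ^{K+B})/(1−θ^{K+B+1}). -/

import Mathlib

/-!
By the tail formula, `E[X] = ∫₀^∞ P(X > t) dt`, and here the tail `1 - F` is the combination
`(e^{-λt} - θ^{K+B} e^{-rt}) / (1 - θ^{K+B})` of two exponentials, whose integral is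
`(1/λ - θ^{K+B}/r) / (1 - θ^{K+B})`; since `r = λ/θ` this is the claimed value.
-/

open MeasureTheory Real Set

theorem integral_exp_neg_mul_Ioi_zero {b : ℝ} (hb : 0 < b) :
    ∫ x in Ioi (0 : ℝ), exp (-b * x) = b⁻¹ := by
  rw [integral_exp_mul_Ioi (neg_lt_zero.mpr hb)]
  simp

theorem integral_Ioi_zero_sub_exp_neg_mul {a b α β : ℝ} (hα : 0 < α) (hβ : 0 < β) :
    ∫ t in Ioi (0 : ℝ), (a * exp (-α * t) - b * exp (-β * t)) = a / α - b / β := by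
  rw [integral_sub ((exp_neg_integrableOn_Ioi 0 hα).const_mul a)
    ((exp_neg_integrableOn_Ioi 0 hβ).const_mul b), integral_const_mul, integral_const_mul,
    integral_exp_neg_mul_Ioi_zero hα, integral_exp_neg_mul_Ioi_zero hβ, div_eq_mul_inv,
    div_eq_mul_inv]

/-- Unlike `Integrable.integral_eq_integral_meas_lt`, integrability of `X` is not assumed:
it follows from that of its tail `S`. -/
theorem integral_eq_integral_Ioi_of_measureReal_lt_eq {Ω : Type*} [MeasurableSpace Ω]
    {μ : Measure Ω} [IsFiniteMeasure μ] {X : Ω → ℝ} (hX_nonneg : 0 ≤ᵐ[μ] X)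
    (hX_meas : AEMeasurable X μ) {S : ℝ → ℝ} (hS_int : IntegrableOn S (Ioi 0))
    (hS : ∀ t, 0 < t → μ.real {ω | t < X ω} = S t) :
    ∫ ω, X ω ∂μ = ∫ t in Ioi 0, S t := by
  have hS_nonneg : 0 ≤ᵐ[volume.restrict (Ioi (0 : ℝ))] S := by
    filter_upwards [ae_restrict_mem measurableSet_Ioi] with t ht
    exact hS t ht ▸ measureReal_nonneg
  have h_tail : ∫⁻ t in Ioi 0, μ {ω | t < X ω} = ∫⁻ t in Ioi 0, ENNReal.ofReal (S t) := by
    refine setLIntegral_congr_fun measurableSet_Ioi fun t ht => ?_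
    rw [← hS t ht, measureReal_def, ENNReal.ofReal_toReal (measure_ne_top μ _)]
  rw [integral_eq_lintegral_of_nonneg_ae hX_nonneg hX_meas.aestronglyMeasurable,
    lintegral_eq_lintegral_meas_lt μ hX_nonneg hX_meas, h_tail,
    ← ofReal_integral_eq_lintegral_ofReal hS_int hS_nonneg,
    ENNReal.toReal_ofReal (integral_nonneg_of_ae hS_nonneg)]

theorem stmt_3_general (r θ lam : ℝ) (hr : 0 < r) (hθ0 : 0 < θ) (hlam : lam = r * θ)
    (K B : ℕ)
    {Ω : Type*} [MeasurableSpace Ω] (μ : Measure Ω) [IsProbabilityMeasure μ]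
    (X : Ω → ℝ) (hXmeas : Measurable X) (hXnonneg : ∀ ω, 0 ≤ X ω)
    (hCDF : ∀ x : ℝ, 0 ≤ x →
      (μ {ω | X ω ≤ x}).toReal
        = 1 + Real.exp (-r * x) * θ ^ (K + B) / (1 - θ ^ (K + B))
          - Real.exp (-lam * x) / (1 - θ ^ (K + B))) :
    ∫ ω, X ω ∂μ = (1 - θ ^ (K + B + 1)) / (lam * (1 - θ ^ (K + B))) := by
  set c := 1 - θ ^ (K + B)
  have hlam_pos : 0 < lam := hlam ▸ mul_pos hr hθ0
  have h_tail : ∀ t, 0 < t → μ.real {ω | t < X ω}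
      = c⁻¹ * exp (-lam * t) - (θ ^ (K + B) / c) * exp (-r * t) := by
    intro t ht
    have h_compl : {ω | t < X ω} = {ω | X ω ≤ t}ᶜ := by ext; simp
    rw [h_compl, probReal_compl_eq_one_sub (measurableSet_le hXmeas measurable_const),
      measureReal_def, hCDF t ht.le]
    ring
  have h_tail_int : IntegrableOn
      (fun t => c⁻¹ * exp (-lam * t) - (θ ^ (K + B) / c) * exp (-r * t)) (Ioi 0) :=
    ((exp_neg_integrableOn_Ioi 0 hlam_pos).const_mul _).sub
      ((exp_neg_integrableOn_Ioi 0 hr).const_mul _)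
  rw [integral_eq_integral_Ioi_of_measureReal_lt_eq (Filter.Eventually.of_forall hXnonneg)
      hXmeas.aemeasurable h_tail_int h_tail,
    integral_Ioi_zero_sub_exp_neg_mul hlam_pos hr, hlam]
  field_simp
  ring

theorem stmt_3 (r θ lam : ℝ) (hr : 0 < r) (hθ0 : 0 < θ) (hθ1 : θ < 1) (hlam : lam = r * θ)
    (K B : ℕ) (hK : 1 ≤ K) (hB : 1 ≤ B)
    {Ω : Type*} [MeasurableSpace Ω] (μ : Measure Ω) [IsProbabilityMeasure μ]
    (X : Ω → ℝ) (hXmeas : Measurable X) (hXnonneg : ∀ ω, 0 ≤ X ω)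
    (hCDF : ∀ x : ℝ, 0 ≤ x →
      (μ {ω | X ω ≤ x}).toReal
        = 1 + Real.exp (-r * x) * θ ^ (K + B) / (1 - θ ^ (K + B))
          - Real.exp (-lam * x) / (1 - θ ^ (K + B))) :
    ∫ ω, X ω ∂μ = (1 - θ ^ (K + B + 1)) / (lam * (1 - θ ^ (K + B))) :=
  stmt_3_general r θ lam hr hθ0 hlam K B μ X hXmeas hXnonneg hCDF
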